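/- arXiv:2103.13535 — 2 statements merged into one kernel-verified Lean document; each statement's English description precedes it below -/
import Mathlib

section
/- Let Q_k : 𝔻_ρ → ℂ be holomorphic and bounded by M on the polydisc 𝔻_ρ ⊂ ℂ^d, let v ∈ ℂ^d with |v| ≥ c > 0, and suppose Q_k vanishes on {⟨v,I⟩ = 0}. Define F_k(I) = Q_k(I)/(4πi⟨v,I⟩) off the hyperplane, extended holomorphically. Then for any 0 < δ < ρ, sup over 𝔻_{ρ−δ} of |F_k| is at most M/(δ·c). -/
/-!
Off the slab `‖⟪v, I⟫‖ < δc/2` the bound is immediate from `‖Q‖ ≤ M` and `4π ≥ 2`. A point `I`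
inside the slab is the centre of a small complex disc, transversal to the hyperplane, whose
boundary circle lies on the edge of the slab and which stays within distance `δ` of `I`; the
maximum modulus principle for the holomorphic restriction of `F` to this disc transfers the
bound from the circle to `I`.
-/

open Metric

section MaximumModulusAcrossHyperplane

variable {E : Type*} [NormedAddCommGroup E] {f : E → ℂ} {U : Set E} {x : E} {ε K : ℝ}

theorem norm_le_of_norm_le_away_from_ker [NormedSpace ℂ E] (ℓ : E →ₗ[ℂ] ℂ) {u : E}
    (hε : 0 < ε) (hℓu : ℓ u = 1) (hf : DifferentiableOn ℂ f U)
    (hK : ∀ w ∈ U, ε ≤ ‖ℓ w‖ → ‖f w‖ ≤ K) (hx : ball x (2 * ε * ‖u‖) ⊆ U) :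
    ‖f x‖ ≤ K := by
  have hu : u ≠ 0 := by rintro rfl; simp at hℓu
  rcases le_or_gt ε ‖ℓ x‖ with hfar | hnear
  · exact hK x (hx (mem_ball_self (by positivity))) hfar
  set z₀ := -ℓ x
  have hz₀ : ‖z₀‖ < ε := by rwa [norm_neg]
  have hline : ∀ z : ℂ, ‖z‖ < 2 * ε → x + z • u ∈ U := fun z hz ↦ hx <| by
    rw [mem_ball, dist_eq_norm, add_sub_cancel_left, norm_smul]
    exact mul_lt_mul_of_pos_right hz (norm_pos_iff.2 hu)
  have hdisc : ∀ z ∈ closedBall z₀ ε, ‖z‖ < 2 * ε := fun z hz ↦ by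
    linarith [norm_le_norm_add_norm_sub' z z₀, mem_closedBall_iff_norm.1 hz]
  have hg : DiffContOnCl ℂ (fun z : ℂ ↦ f (x + z • u)) (ball z₀ ε) := by
    refine DifferentiableOn.diffContOnCl ?_
    rw [closure_ball _ hε.ne']
    exact hf.comp (by fun_prop) fun z hz ↦ hline z (hdisc z hz)
  have hcircle : ∀ z ∈ frontier (ball z₀ ε), ‖f (x + z • u)‖ ≤ K := by
    rw [frontier_ball _ hε.ne']
    intro z hz
    refine hK _ (hline z (hdisc z (sphere_subset_closedBall hz))) (le_of_eq ?_)
    rw [map_add, map_smul, hℓu, smul_eq_mul, mul_one, ← mem_sphere_iff_norm.1 hz,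
      sub_neg_eq_add, add_comm]
  have hcentre : (0 : ℂ) ∈ closure (ball z₀ ε) :=
    subset_closure (by rwa [mem_ball_iff_norm, zero_sub, norm_neg])
  simpa using Complex.norm_le_of_forall_mem_frontier_norm_le isBounded_ball hg hcircle hcentre

theorem norm_le_of_norm_le_away_from_orthogonal [InnerProductSpace ℂ E] {a : E} (ha : a ≠ 0)
    (hε : 0 < ε) (hf : DifferentiableOn ℂ f U) (hK : ∀ w ∈ U, ε ≤ ‖inner ℂ a w‖ → ‖f w‖ ≤ K)
    (hx : ball x (2 * ε / ‖a‖) ⊆ U) : ‖f x‖ ≤ K := by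
  have ha' : ‖a‖ ≠ 0 := norm_ne_zero_iff.2 ha
  refine norm_le_of_norm_le_away_from_ker (innerₛₗ ℂ a) (u := ((‖a‖ : ℂ) ^ 2)⁻¹ • a)
    hε ?_ hf hK ?_
  · simp [inner_self_eq_norm_sq_to_K, ha']
  · convert hx using 2
    rw [norm_smul, norm_inv, norm_pow, Complex.norm_real, Real.norm_of_nonneg (norm_nonneg a)]
    field_simp

end MaximumModulusAcrossHyperplane

theorem norm_div_four_pi_I_mul_le {q L : ℂ} {M a : ℝ} (hq : ‖q‖ ≤ M) (ha : 0 < a)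
    (hL : a / 2 ≤ ‖L‖) : ‖q / (4 * Real.pi * Complex.I * L)‖ ≤ M / a := by
  have hM : 0 ≤ M := (norm_nonneg q).trans hq
  rw [norm_div, norm_mul, norm_mul, norm_mul, Complex.norm_real, Complex.norm_I,
    Real.norm_of_nonneg Real.pi_pos.le, mul_one, RCLike.norm_ofNat]
  refine div_le_div₀ hM hq ha ?_
  nlinarith [Real.pi_gt_three]

theorem stmt_7_general (d : ℕ) (ρ δ M c : ℝ) (hδ : 0 < δ)
    (hc : 0 < c)
    (v : EuclideanSpace ℂ (Fin d)) (hv : c ≤ ‖v‖)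
    (Q F : EuclideanSpace ℂ (Fin d) → ℂ)
    (hQM : ∀ I ∈ Metric.ball (0 : EuclideanSpace ℂ (Fin d)) ρ, ‖Q I‖ ≤ M)
    (hFd : DifferentiableOn ℂ F (Metric.ball 0 ρ))
    (hFQ : ∀ I ∈ Metric.ball (0 : EuclideanSpace ℂ (Fin d)) ρ,
      (∑ i, v i * I i) ≠ 0 →
      F I = Q I / (4 * (Real.pi : ℂ) * Complex.I * ∑ i, v i * I i)) :
    ∀ I : EuclideanSpace ℂ (Fin d), ‖I‖ ≤ ρ - δ → ‖F I‖ ≤ M / (δ * c) := by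
  intro I hI
  set a : EuclideanSpace ℂ (Fin d) := WithLp.toLp 2 (star v.ofLp)
  have ha_inner : ∀ w, inner ℂ a w = ∑ i, v i * w i := fun w ↦ by
    simp [a, PiLp.inner_apply, mul_comm]
  have ha_norm : ‖a‖ = ‖v‖ := by simp [a, EuclideanSpace.norm_eq]
  have hv₀ : 0 < ‖v‖ := hc.trans_le hv
  have hδc : 0 < δ * c := mul_pos hδ hc
  refine norm_le_of_norm_le_away_from_orthogonal (norm_pos_iff.1 (ha_norm ▸ hv₀))
    (half_pos hδc) hFd (fun w hw hL ↦ ?_) ?_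
  · rw [ha_inner] at hL
    rw [hFQ w hw (norm_pos_iff.1 ((half_pos hδc).trans_le hL))]
    exact norm_div_four_pi_I_mul_le (hQM w hw) hδc hL
  · refine ball_subset_ball' ?_
    have : δ * c / ‖v‖ ≤ δ := (div_le_iff₀ hv₀).2 (mul_le_mul_of_nonneg_left hv hδ.le)
    rw [dist_zero_right, ha_norm, mul_div_cancel₀ _ two_ne_zero]
    linarith

/-- Let `Q` be holomorphic and bounded by `M` on the ball
`𝔻_ρ ⊂ ℂ^d`, let `v` with `|v| ≥ c > 0`, and suppose `Q` vanishes on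
`{⟨v,I⟩ = 0}`.  If `F` is the holomorphic extension of
`I ↦ Q(I)/(4πi⟨v,I⟩)`, then `sup_{𝔻_{ρ-δ}} |F| ≤ M/(δ·c)`. -/
theorem stmt_7 (d : ℕ) (ρ δ M c : ℝ) (hρ : 0 < ρ) (hδ : 0 < δ) (hδρ : δ < ρ)
    (hc : 0 < c)
    (v : EuclideanSpace ℂ (Fin d)) (hv : c ≤ ‖v‖)
    (Q F : EuclideanSpace ℂ (Fin d) → ℂ)
    (hQd : DifferentiableOn ℂ Q (Metric.ball 0 ρ))
    (hQM : ∀ I ∈ Metric.ball (0 : EuclideanSpace ℂ (Fin d)) ρ, ‖Q I‖ ≤ M)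
    (hQ0 : ∀ I ∈ Metric.ball (0 : EuclideanSpace ℂ (Fin d)) ρ,
      (∑ i, v i * I i) = 0 → Q I = 0)
    (hFd : DifferentiableOn ℂ F (Metric.ball 0 ρ))
    (hFQ : ∀ I ∈ Metric.ball (0 : EuclideanSpace ℂ (Fin d)) ρ,
      (∑ i, v i * I i) ≠ 0 →
      F I = Q I / (4 * (Real.pi : ℂ) * Complex.I * ∑ i, v i * I i)) :
    ∀ I : EuclideanSpace ℂ (Fin d), ‖I‖ ≤ ρ - δ → ‖F I‖ ≤ M / (δ * c) :=
  stmt_7_general d ρ δ M c hδ hc v hv Q F hQM hFd hFQ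
end

section
/- Let F be analytic on A_{r−δ, r−δ} with majorant norm |F|_{r−δ,r−δ} ≤ δ³ (for 0 < 3δ < r ≤ 1). Then the time-t Hamiltonian flow X_F^t of F, for 0 ≤ t ≤ 1, maps A_{r−3δ, r−3δ} into A_{r−2δ, r−2δ}, and |X_F^t(I,θ) − (I,θ)| ≤ δ² on A_{r−3δ,r−3δ}. -/
/-!
The Hamiltonian vector field at `q` is read off the differential `dF(q)`, so its size is bounded
by `‖dF(q)‖`. Cauchy's estimate on complex lines through `q` bounds `‖dF(q)‖` by `δ³ / δ = δ²` as
long as `q` stays in `A_{r-2δ}`, whose `δ`-neighbourhood lies in `A_{r-δ}`. A continuity (fencing)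
argument then shows that a trajectory starting in `A_{r-3δ}` moves with speed at most `δ²`, hence
by at most `δ² < δ` in unit time, so it never leaves `A_{r-2δ}`.
-/

open Set Metric Filter Topology

section Cauchy

variable {E G : Type*} [NormedAddCommGroup E] [NormedSpace ℂ E]
  [NormedAddCommGroup G] [NormedSpace ℂ G]

theorem norm_fderiv_le_of_forall_mem_closedBall_norm_le {F : E → G} {q : E} {ρ M : ℝ}
    (hρ : 0 < ρ) (hF : DifferentiableOn ℂ F (closedBall q ρ))
    (hM : ∀ p ∈ closedBall q ρ, ‖F p‖ ≤ M) : ‖fderiv ℂ F q‖ ≤ M / ρ := by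
  have hM₀ : 0 ≤ M := (norm_nonneg _).trans (hM q (mem_closedBall_self hρ.le))
  refine ContinuousLinearMap.opNorm_le_of_unit_norm (div_nonneg hM₀ hρ.le) fun u hu => ?_
  have hline : MapsTo (fun z : ℂ => q + z • u) (closedBall 0 ρ) (closedBall q ρ) := by
    intro z hz
    simpa [norm_smul, hu] using hz
  have hline' : ∀ z : ℂ, HasDerivAt (fun z : ℂ => q + z • u) u z := fun z => by
    simpa using ((hasDerivAt_id z).smul_const u).const_add q
  have hg : DiffContOnCl ℂ (fun z : ℂ => F (q + z • u)) (ball 0 ρ) := by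
    refine DifferentiableOn.diffContOnCl ?_
    rw [closure_ball _ hρ.ne']
    exact hF.comp (fun z _ => (hline' z).differentiableAt.differentiableWithinAt) hline
  have hderiv : HasDerivAt (fun z : ℂ => F (q + z • u)) (fderiv ℂ F q u) 0 := by
    have hFq : HasFDerivAt F (fderiv ℂ F q) (q + (0 : ℂ) • u) := by
      rw [zero_smul, add_zero]
      exact (hF.differentiableAt (closedBall_mem_nhds q hρ)).hasFDerivAt
    exact hFq.comp_hasDerivAt 0 (hline' 0)
  rw [← hderiv.deriv]
  exact Complex.norm_deriv_le_of_forall_mem_sphere_norm_le hρ hg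
    fun z hz => hM _ (hline (sphere_subset_closedBall hz))

end Cauchy

theorem norm_image_sub_le_of_norm_deriv_le_segment_of_near {E : Type*} [NormedAddCommGroup E]
    [NormedSpace ℝ E] {φ φ' : ℝ → E} {a b C R : ℝ}
    (hφ : ∀ t ∈ Icc a b, HasDerivWithinAt φ (φ' t) (Icc a b) t)
    (hbound : ∀ t ∈ Icc a b, ‖φ t - φ a‖ < R → ‖φ' t‖ ≤ C)
    (hC : 0 ≤ C) (hCR : C * (b - a) < R) :
    ∀ t ∈ Icc a b, ‖φ t - φ a‖ ≤ C * (t - a) := by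
  have hC' : ∀ᶠ C' in 𝓝[>] C, C' * (b - a) < R :=
    nhdsWithin_le_nhds (((continuous_mul_const (b - a)).tendsto C).eventually (gt_mem_nhds hCR))
  obtain ⟨C', hC'R, hCC'⟩ := (hC'.and self_mem_nhdsWithin).exists
  have hφ' : ∀ t ∈ Ico a b, HasDerivWithinAt φ (φ' t) (Ici t) t := fun t ht =>
    (hφ t (Ico_subset_Icc_self ht)).mono_of_mem_nhdsWithin (Icc_mem_nhdsGE_of_mem ht)
  -- The steeper cone `C' (t - a)` is a strict fence, so `φ` never reaches distance `R`.
  have hconfined : ∀ t ∈ Icc a b, ‖φ t - φ a‖ ≤ C' * (t - a) := by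
    refine image_norm_le_of_norm_deriv_right_lt_deriv_boundary'
      (f := fun t => φ t - φ a) (B' := fun _ => C')
      (fun t ht => ((hφ t ht).sub_const (φ a)).continuousWithinAt)
      (fun t ht => (hφ' t ht).sub_const (φ a)) (by simp)
      (continuous_const.mul (continuous_id.sub continuous_const)).continuousOn
      (fun t _ => by simpa using ((hasDerivWithinAt_id t (Ici t)).sub_const a).const_mul C') ?_
    intro t ht heq
    refine (hbound t (Ico_subset_Icc_self ht) ?_).trans_lt hCC'
    rw [heq]
    calc C' * (t - a) ≤ C' * (b - a) := by gcongr; exacts [hC.trans hCC'.le, ht.2.le]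
      _ < R := hC'R
  refine norm_image_sub_le_of_norm_deriv_le_segment' hφ fun t ht =>
    hbound t (Ico_subset_Icc_self ht) ?_
  calc ‖φ t - φ a‖ ≤ C' * (t - a) := hconfined t (Ico_subset_Icc_self ht)
    _ ≤ C' * (b - a) := by gcongr; exacts [hC.trans hCC'.le, ht.2.le]
    _ < R := hC'R

section PhaseSpace

variable {ι : Type*} [Fintype ι]

def complexAnnulus (ι : Type*) [Fintype ι] (s : ℝ) : Set ((ι → ℂ) × (ι → ℂ)) :=
  {p | ‖p.1‖ < s ∧ ‖(fun i => (p.2 i).im : ι → ℝ)‖ < s}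

theorem norm_pi_im_le (w : ι → ℂ) : ‖(fun i => (w i).im : ι → ℝ)‖ ≤ ‖w‖ :=
  (pi_norm_le_iff_of_nonneg (norm_nonneg w)).2 fun i =>
    (Complex.abs_im_le_norm (w i)).trans (norm_le_pi_norm w i)

theorem add_mem_complexAnnulus {p v : (ι → ℂ) × (ι → ℂ)} {s ε : ℝ}
    (hp : p ∈ complexAnnulus ι s) (hv : ‖v‖ ≤ ε) : p + v ∈ complexAnnulus ι (s + ε) := by
  obtain ⟨hp₁, hp₂⟩ := hp
  constructor
  · calc ‖p.1 + v.1‖ ≤ ‖p.1‖ + ‖v.1‖ := norm_add_le _ _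
      _ < s + ε := by linarith [norm_fst_le v]
  · have him : (fun i => ((p + v).2 i).im : ι → ℝ)
        = (fun i => (p.2 i).im) + fun i => (v.2 i).im := by
      ext i; simp
    calc ‖(fun i => ((p + v).2 i).im : ι → ℝ)‖
        ≤ ‖(fun i => (p.2 i).im : ι → ℝ)‖ + ‖(fun i => (v.2 i).im : ι → ℝ)‖ := by
          rw [him]; exact norm_add_le _ _
      _ < s + ε := by linarith [norm_pi_im_le v.2, norm_snd_le v]

theorem closedBall_subset_complexAnnulus {p : (ι → ℂ) × (ι → ℂ)} {s ε : ℝ}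
    (hp : p ∈ complexAnnulus ι s) : closedBall p ε ⊆ complexAnnulus ι (s + ε) := fun q hq => by
  simpa using add_mem_complexAnnulus hp (mem_closedBall_iff_norm.1 hq)

variable [DecidableEq ι]

noncomputable def symplecticGradient (L : (ι → ℂ) × (ι → ℂ) →L[ℂ] ℂ) : (ι → ℂ) × (ι → ℂ) :=
  (fun i => L (0, Pi.single i 1), fun i => -L (Pi.single i 1, 0))

theorem norm_symplecticGradient_le (L : (ι → ℂ) × (ι → ℂ) →L[ℂ] ℂ) :
    ‖symplecticGradient L‖ ≤ ‖L‖ := by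
  refine norm_prod_le_iff.2 ⟨?_, ?_⟩ <;>
    refine (pi_norm_le_iff_of_nonneg (norm_nonneg L)).2 fun i => ?_
  · exact L.unit_le_opNorm _ (by simp [Pi.norm_single])
  · simpa only [symplecticGradient, norm_neg] using L.unit_le_opNorm _ (by simp [Pi.norm_single])

end PhaseSpace

/-- Let `F` be analytic on the complex annulus
`A_{r−δ,r−δ} = {(I,θ) : ‖I‖ < r−δ, ‖Im θ‖ < r−δ}` with `|F| ≤ δ³` there
(`0 < 3δ < r ≤ 1`).  Then the time-`t` Hamiltonian flow `X_F^t` of `F`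
(`İ = ∂_θF`, `θ̇ = −∂_I F`), for `0 ≤ t ≤ 1`, maps `A_{r−3δ,r−3δ}` into
`A_{r−2δ,r−2δ}` and moves points by at most `δ²`. -/
theorem stmt_15 (d : ℕ) (r δ : ℝ) (hδ : 0 < δ) (h3 : 3 * δ < r) (hr : r ≤ 1)
    (A : ℝ → Set ((Fin d → ℂ) × (Fin d → ℂ)))
    (hA : ∀ s, A s = {p | ‖p.1‖ < s ∧ ‖(fun i => (p.2 i).im : Fin d → ℝ)‖ < s})
    (F : ((Fin d → ℂ) × (Fin d → ℂ)) → ℂ)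
    (hFd : DifferentiableOn ℂ F (A (r - δ)))
    (hFb : ∀ p ∈ A (r - δ), ‖F p‖ ≤ δ ^ 3)
    (X : ℝ → ((Fin d → ℂ) × (Fin d → ℂ)) → ((Fin d → ℂ) × (Fin d → ℂ)))
    (hX0 : ∀ p, X 0 p = p)
    (hflow : ∀ t ∈ Set.Icc (0 : ℝ) 1, ∀ p ∈ A (r - 3 * δ),
      HasDerivAt (fun s => X s p)
        (fun i => fderiv ℂ F (X t p) (0, Pi.single i 1),
         fun i => -fderiv ℂ F (X t p) (Pi.single i 1, 0)) t) :
    ∀ t ∈ Set.Icc (0 : ℝ) 1, ∀ p ∈ A (r - 3 * δ),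
      X t p ∈ A (r - 2 * δ) ∧ ‖X t p - p‖ ≤ δ ^ 2 := by
  obtain rfl : A = complexAnnulus (Fin d) := funext hA
  have hδ₁ : δ < 1 := by linarith
  have hvel : ∀ q ∈ complexAnnulus (Fin d) (r - 2 * δ),
      ‖symplecticGradient (fderiv ℂ F q)‖ ≤ δ ^ 2 := by
    intro q hq
    have hsub : closedBall q δ ⊆ complexAnnulus (Fin d) (r - δ) := by
      convert closedBall_subset_complexAnnulus (ε := δ) hq using 2
      ring
    calc ‖symplecticGradient (fderiv ℂ F q)‖ ≤ ‖fderiv ℂ F q‖ := norm_symplecticGradient_le _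
      _ ≤ δ ^ 3 / δ := norm_fderiv_le_of_forall_mem_closedBall_norm_le hδ (hFd.mono hsub)
          fun p hp => hFb p (hsub hp)
      _ = δ ^ 2 := by field_simp
  intro t ht p hp
  have hnear : ∀ q, ‖q - p‖ ≤ δ → q ∈ complexAnnulus (Fin d) (r - 2 * δ) := fun q hq => by
    convert closedBall_subset_complexAnnulus hp (mem_closedBall_iff_norm.2 hq) using 2
    ring
  have hdrift : ‖X t p - p‖ ≤ δ ^ 2 * t := by
    simpa only [hX0, sub_zero] using
      norm_image_sub_le_of_norm_deriv_le_segment_of_near (φ := fun s => X s p) (R := δ)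
      (fun s hs => (hflow s hs p hp).hasDerivWithinAt)
      (fun s _ hs => hvel _ (hnear _ (by simpa [hX0] using hs.le))) (sq_nonneg δ)
      (by nlinarith) t ht
  have hmove : ‖X t p - p‖ ≤ δ ^ 2 := hdrift.trans (by nlinarith [ht.2])
  exact ⟨hnear _ (hmove.trans (by nlinarith)), hmove⟩
end
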